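/- Let R be a DVR with uniformizer π and let Γ be an abstract group. Suppose that every finitely generated R-module V with πV = 0 carrying a Γ-action admits a weak lift, i.e., there is a Γ-equivariant surjection Ṽ → V from a Γ-representation Ṽ whose underlying R-module is finitely generated and torsion-free. Then every Γ-representation E on a finitely generated R-module admits a weak lift. -/

import Mathlib

/-!
Induct on an exponent `n` with `π ^ n` killing the torsion of `E`; one exists because the
torsion submodule is finitely generated. Lift `E / πE` weakly to `W`; the fibre product
`W ×_{E/πE} E` is a finitely generated representation surjecting onto `E`. A torsion element
`(w, e)` of it has `w = 0` since `W` is torsion-free, so `e = π e'` with `e'` torsion, and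
therefore `π ^ (n - 1)` kills the torsion of the fibre product.
-/

/-- A weak lift of a representation `ρ` of the abstract group `Γ` on the `R`-module `V`:
a representation on a finitely generated torsion-free `R`-module together with an
equivariant surjection onto `V`. -/
structure WeakLift (R Γ : Type) [CommRing R] [Group Γ] (V : Type) [AddCommGroup V]
    [Module R V] (ρ : Representation R Γ V) where
  W : Type
  [instAddCommGroup : AddCommGroup W]
  [instModule : Module R W]
  finite : Module.Finite R W
  torsionFree : NoZeroSMulDivisors R W
  σ : Representation R Γ W
  f : W →ₗ[R] V
  surjective : Function.Surjective f
  equivariant : ∀ γ : Γ, f ∘ₗ σ γ = ρ γ ∘ₗ f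

open Submodule Pointwise

namespace WeakLift

variable {R Γ : Type} [CommRing R] [Group Γ] {E : Type} [AddCommGroup E] [Module R E]
  {ρ : Representation R Γ E}

def ofNoZeroSMulDivisors [Module.Finite R E] [NoZeroSMulDivisors R E] : WeakLift R Γ E ρ where
  W := E
  finite := ‹_›
  torsionFree := ‹_›
  σ := ρ
  f := LinearMap.id
  surjective := Function.surjective_id
  equivariant _ := rfl

def comp {E' : Type} [AddCommGroup E'] [Module R E'] {ρ' : Representation R Γ E'}
    (L : WeakLift R Γ E' ρ') (g : E' →ₗ[R] E) (hg : Function.Surjective g)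
    (hgρ : ∀ γ : Γ, g ∘ₗ ρ' γ = ρ γ ∘ₗ g) : WeakLift R Γ E ρ :=
  letI := L.instAddCommGroup
  letI := L.instModule
  { W := L.W
    finite := L.finite
    torsionFree := L.torsionFree
    σ := L.σ
    f := g ∘ₗ L.f
    surjective := hg.comp L.surjective
    equivariant := fun γ => by
      rw [LinearMap.comp_assoc, L.equivariant γ, ← LinearMap.comp_assoc, hgρ γ,
        LinearMap.comp_assoc] }

end WeakLift

namespace Representation

variable {R Γ : Type} [CommRing R] [Monoid Γ] {E : Type} [AddCommGroup E] [Module R E]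

def quotSMulTop (ρ : Representation R Γ E) (r : R) : Representation R Γ (QuotSMulTop r E) where
  toFun γ := QuotSMulTop.map r (ρ γ)
  map_one' := by rw [map_one, Module.End.one_eq_id, QuotSMulTop.map_id]; rfl
  map_mul' γ δ := by rw [map_mul, Module.End.mul_eq_comp, QuotSMulTop.map_comp]; rfl

theorem mkQ_comp_eq_quotSMulTop_comp_mkQ (ρ : Representation R Γ E) (r : R) (γ : Γ) :
    (r • ⊤ : Submodule R E).mkQ ∘ₗ ρ γ = ρ.quotSMulTop r γ ∘ₗ (r • ⊤ : Submodule R E).mkQ :=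
  (QuotSMulTop.map_comp_mkQ r (ρ γ)).symm

end Representation

namespace LinearMap

variable {R : Type} [CommRing R] {W E V : Type} [AddCommGroup W] [Module R W]
  [AddCommGroup E] [Module R E] [AddCommGroup V] [Module R V]

def fiberProduct (f : W →ₗ[R] V) (g : E →ₗ[R] V) : Submodule R (W × E) :=
  ker (f ∘ₗ fst R W E - g ∘ₗ snd R W E)

variable {f : W →ₗ[R] V} {g : E →ₗ[R] V}

theorem mem_fiberProduct {x : W × E} : x ∈ f.fiberProduct g ↔ f x.1 = g x.2 := by
  simp [fiberProduct, sub_eq_zero]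

theorem fiberProduct_le_comap_prod {Γ : Type} [Monoid Γ] {σ : Representation R Γ W}
    {ρ : Representation R Γ E} {τ : Representation R Γ V} (hf : ∀ γ, f ∘ₗ σ γ = τ γ ∘ₗ f)
    (hg : ∀ γ, g ∘ₗ ρ γ = τ γ ∘ₗ g) (γ : Γ) :
    f.fiberProduct g ≤ (f.fiberProduct g).comap (σ.prod ρ γ) := by
  intro x hx
  rw [Submodule.mem_comap, mem_fiberProduct] at *
  simp only [Representation.prod_apply_apply]
  rw [← comp_apply, hf, ← comp_apply g, hg, comp_apply, comp_apply, hx]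

theorem snd_comp_subtype_fiberProduct_surjective (hf : Function.Surjective f) :
    Function.Surjective (snd R W E ∘ₗ (f.fiberProduct g).subtype) := by
  intro e
  obtain ⟨w, hw⟩ := hf (g e)
  exact ⟨⟨(w, e), mem_fiberProduct.2 hw⟩, rfl⟩

end LinearMap

section Torsion

variable {R : Type} [CommRing R] [IsDomain R] {E : Type} [AddCommGroup E] [Module R E] {π : R}

theorem pow_smul_eq_zero_of_mem_torsion_fiberProduct {W : Type} [AddCommGroup W] [Module R W]
    [NoZeroSMulDivisors R W] (hπ : π ≠ 0) {n : ℕ}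
    (hE : ∀ e ∈ torsion R E, π ^ (n + 1) • e = 0) (f : W →ₗ[R] QuotSMulTop π E)
    (p : f.fiberProduct (π • ⊤ : Submodule R E).mkQ) (hp : p ∈ torsion R _) : π ^ n • p = 0 := by
  obtain ⟨r, hr⟩ := (mem_torsion_iff p).1 hp
  have hr' : (r : R) • (p : W × E) = 0 := congrArg Subtype.val hr
  have hw : (p : W × E).1 = 0 :=
    (smul_eq_zero.1 (congrArg Prod.fst hr')).resolve_left (nonZeroDivisors.coe_ne_zero r)
  obtain ⟨e, -, he⟩ : ∃ e ∈ (⊤ : Submodule R E), π • e = (p : W × E).2 := by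
    rw [← mem_smul_pointwise_iff_exists, ← Submodule.Quotient.mk_eq_zero, ← mkQ_apply,
      ← LinearMap.mem_fiberProduct.1 p.2, hw, map_zero]
  have he_tors : e ∈ torsion R E := by
    refine ⟨⟨r * π, mul_mem r.2 (mem_nonZeroDivisors_of_ne_zero hπ)⟩, ?_⟩
    rw [Submonoid.smul_def, mul_smul, he]
    exact congrArg Prod.snd hr'
  refine Subtype.ext (Prod.ext ?_ ?_)
  · simp [hw]
  · simp [← he, smul_smul, ← pow_succ, hE e he_tors]

theorem exists_pow_smul_eq_zero_of_mem_torsion [IsDiscreteValuationRing R] [Module.Finite R E]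
    (hπ : Irreducible π) : ∃ n : ℕ, ∀ e ∈ torsion R E, π ^ n • e = 0 := by
  obtain ⟨r, hr_ann, hr⟩ :=
    annihilator_top_inter_nonZeroDivisors (torsion_isTorsion (R := R) (M := E))
  obtain ⟨n, u, rfl⟩ :=
    IsDiscreteValuationRing.eq_unit_mul_pow_irreducible (nonZeroDivisors.ne_zero hr) hπ
  refine ⟨n, fun e he => ?_⟩
  have h : ((u : R) * π ^ n) • (⟨e, he⟩ : torsion R E) = 0 := mem_annihilator.1 hr_ann _ mem_top
  rw [mul_smul, ← Units.smul_def, smul_eq_zero_iff_eq] at h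
  exact congrArg Subtype.val h

end Torsion

theorem WeakLift.nonempty_of_pow_smul_torsion_eq_zero {R : Type} [CommRing R] [IsDomain R]
    [IsNoetherianRing R] {π : R} (hπ : π ≠ 0) {Γ : Type} [Group Γ]
    (h : ∀ (V : Type) [AddCommGroup V] [Module R V], Module.Finite R V →
      (∀ v : V, π • v = 0) → ∀ ρ : Representation R Γ V, Nonempty (WeakLift R Γ V ρ)) (n : ℕ) :
    ∀ (E : Type) [AddCommGroup E] [Module R E], Module.Finite R E → ∀ ρ : Representation R Γ E,
      (∀ e ∈ torsion R E, π ^ n • e = 0) → Nonempty (WeakLift R Γ E ρ) := by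
  induction n with
  | zero =>
    intro E _ _ _ ρ hE
    have : NoZeroSMulDivisors R E := ⟨fun {r e} hre => or_iff_not_imp_left.2 fun hr => by
      simpa using hE e ⟨⟨r, mem_nonZeroDivisors_of_ne_zero hr⟩, hre⟩⟩
    exact ⟨.ofNoZeroSMulDivisors⟩
  | succ n ih =>
    intro E _ _ _ ρ hE
    obtain ⟨L⟩ := h (QuotSMulTop π E) inferInstance
      (fun v => Module.mem_annihilator.1 (QuotSMulTop.mem_annihilator E π) v) (ρ.quotSMulTop π)
    let := L.instAddCommGroup
    let := L.instModule
    have := L.finite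
    have := L.torsionFree
    let P := L.f.fiberProduct (π • ⊤ : Submodule R E).mkQ
    have hP := L.f.fiberProduct_le_comap_prod L.equivariant (ρ.mkQ_comp_eq_quotSMulTop_comp_mkQ π)
    obtain ⟨L'⟩ := ih P inferInstance ((L.σ.prod ρ).subrepresentation P hP)
      (pow_smul_eq_zero_of_mem_torsion_fiberProduct hπ hE L.f)
    exact ⟨L'.comp _ (LinearMap.snd_comp_subtype_fiberProduct_surjective L.surjective)
      fun _ => rfl⟩

theorem stmt3 {R : Type} [CommRing R] [IsDomain R] [IsDiscreteValuationRing R]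
    (π : R) (hπ : Irreducible π) (Γ : Type) [Group Γ]
    (h : ∀ (V : Type) [AddCommGroup V] [Module R V], Module.Finite R V →
      (∀ v : V, π • v = 0) → ∀ ρ : Representation R Γ V, Nonempty (WeakLift R Γ V ρ)) :
    ∀ (E : Type) [AddCommGroup E] [Module R E], Module.Finite R E →
      ∀ ρ : Representation R Γ E, Nonempty (WeakLift R Γ E ρ) := by
  intro E _ _ _ ρ
  obtain ⟨n, hn⟩ := exists_pow_smul_eq_zero_of_mem_torsion (E := E) hπ
  exact WeakLift.nonempty_of_pow_smul_torsion_eq_zero hπ.ne_zero h n E inferInstance ρ hn
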